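/- For all parameters A, B, C ∈ ℂ with (C;q)_n ≠ 0 for all n (so in particular qC satisfies the same condition away from its first factor), all y ∈ ℂ with |y| < 1, and all x ∈ ℂ with 0 < |x| < 1, one has (1−C)·Φ₁(A,B;C;q,q₁;x,xy) = (1−C)·Φ₁(A,B;qC;q,q₁;x,xy) + (1−q)·C·x·(D_q h)(x), where h is the function x ↦ Φ₁(A,B;qC;q,q₁;x,xy) (with y fixed) and D_q is the Jackson q-derivative with base q. (Equation (2.23), with C playing the role of q^{c−1}; note |xy| < 1 since |x| < 1 and |y| < 1.) -/

import Mathlib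

/-!
Write `T_C(ℓ, k)` for the `(ℓ, k)` term of `Φ₁(A, B; C; q, q₁; x, xy)`. Since the second variable
is `xy`, replacing `x` by `qx` multiplies `T_C(ℓ, k)` by `q^(ℓ+k)`, so with `h` as in the statement
`(1 - q) x (D_q h)(x) = h(x) - h(qx) = ∑ (1 - q^(ℓ+k)) T_{qC}(ℓ, k)`. On the other hand
`(C;q)_{n+1} = (1 - C) (qC;q)_n = (C;q)_n (1 - C q^n)` gives `(1 - C) T_C = (1 - C q^(ℓ+k)) T_{qC}`,
and `1 - C q^n = (1 - C) + C (1 - q^n)`. All series converge absolutely because `(z;q)_n`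
converges to the infinite product `∏ (1 - z q^r)`, which is nonzero when no factor vanishes, so
both `(z;q)_n` and `1/(C;q)_n` are bounded.
-/

open Complex

/-- The q-shifted factorial (z;q)_n = prod_{r=0}^{n-1} (1 - z q^r). -/
noncomputable def qPoch (q z : ℂ) (n : ℕ) : ℂ :=
  ∏ r ∈ Finset.range n, (1 - z * q ^ r)

/-- The bibasic Humbert hypergeometric function Φ₁ on two independent bases q and q₁. -/
noncomputable def Phi1 (q q1 A B C x y : ℂ) : ℂ :=
  ∑' p : ℕ × ℕ,
    qPoch q A (p.1 + p.2) * qPoch q1 B p.1 /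
      (qPoch q C (p.1 + p.2) * qPoch q1 q1 p.1 * qPoch q q p.2) * x ^ p.1 * y ^ p.2

/-- The Jackson p-derivative. -/
noncomputable def jackson (p : ℂ) (f : ℂ → ℂ) (x : ℂ) : ℂ :=
  (f x - f (p * x)) / ((1 - p) * x)

open Filter Topology

lemma norm_mul_lt_one {a b : ℂ} (ha : ‖a‖ < 1) (hb : ‖b‖ < 1) : ‖a * b‖ < 1 := by
  rw [norm_mul]
  exact mul_lt_one_of_nonneg_of_lt_one_left (norm_nonneg a) ha hb.le

lemma exists_forall_norm_le_of_tendsto {u : ℕ → ℂ} {a : ℂ} (hu : Tendsto u atTop (𝓝 a)) :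
    ∃ M, ∀ n, ‖u n‖ ≤ M := by
  obtain ⟨M, hM⟩ := isBounded_iff_forall_norm_le.1 (Metric.isBounded_range_of_tendsto u hu)
  exact ⟨M, fun n => hM _ ⟨n, rfl⟩⟩

lemma one_sub_mul_mul_jackson {p : ℂ} (hp : p ≠ 1) (f : ℂ → ℂ) (x : ℂ) :
    (1 - p) * x * jackson p f x = f x - f (p * x) := by
  rcases eq_or_ne x 0 with rfl | hx
  · simp
  · have hp' : 1 - p ≠ 0 := sub_ne_zero.2 hp.symm
    rw [jackson]
    field_simp

section QPochhammer

variable {q : ℂ}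

lemma qPoch_succ (z : ℂ) (n : ℕ) : qPoch q z (n + 1) = qPoch q z n * (1 - z * q ^ n) :=
  Finset.prod_range_succ _ n

lemma qPoch_succ' (z : ℂ) (n : ℕ) : qPoch q z (n + 1) = (1 - z) * qPoch q (q * z) n := by
  rw [qPoch, Finset.prod_range_succ', qPoch, mul_comm]
  congr 1
  · simp
  · exact Finset.prod_congr rfl fun r _ => by ring

lemma qPoch_self_ne_zero (hq : ‖q‖ < 1) (n : ℕ) : qPoch q q n ≠ 0 := by
  refine Finset.prod_ne_zero_iff.2 fun r _ => sub_ne_zero.2 fun h => ?_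
  have h' := congrArg norm h
  rw [← pow_succ', norm_pow, norm_one] at h'
  exact (pow_lt_one₀ (norm_nonneg q) hq r.succ_ne_zero).ne' h'

lemma qPoch_mul_ne_zero {z : ℂ} (hz : ∀ n, qPoch q z n ≠ 0) (n : ℕ) : qPoch q (q * z) n ≠ 0 :=
  fun h => hz (n + 1) (by rw [qPoch_succ', h, mul_zero])

lemma one_sub_div_qPoch {z : ℂ} (hz : ∀ n, qPoch q z n ≠ 0) (n : ℕ) :
    (1 - z) / qPoch q z n = (1 - z * q ^ n) / qPoch q (q * z) n := by
  rw [div_eq_div_iff (hz n) (qPoch_mul_ne_zero hz n), ← qPoch_succ', qPoch_succ, mul_comm]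

lemma summable_norm_neg_mul_pow (hq : ‖q‖ < 1) (z : ℂ) :
    Summable fun r : ℕ => ‖-(z * q ^ r)‖ := by
  simpa [norm_mul, norm_pow] using (summable_geometric_of_lt_one (norm_nonneg q) hq).mul_left ‖z‖

lemma tendsto_qPoch (hq : ‖q‖ < 1) (z : ℂ) :
    Tendsto (qPoch q z) atTop (𝓝 (∏' r : ℕ, (1 - z * q ^ r))) := by
  have h :=
    (multipliable_one_add_of_summable (summable_norm_neg_mul_pow hq z)).tendsto_prod_tprod_nat
  simp only [← sub_eq_add_neg] at h
  exact h

lemma exists_forall_norm_qPoch_le (hq : ‖q‖ < 1) (z : ℂ) : ∃ M, ∀ n, ‖qPoch q z n‖ ≤ M :=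
  exists_forall_norm_le_of_tendsto (tendsto_qPoch hq z)

lemma exists_forall_norm_inv_qPoch_le (hq : ‖q‖ < 1) {z : ℂ} (hz : ∀ n, qPoch q z n ≠ 0) :
    ∃ M, ∀ n, ‖(qPoch q z n)⁻¹‖ ≤ M := by
  have hfactor (r : ℕ) : 1 + -(z * q ^ r) ≠ 0 := by
    rw [← sub_eq_add_neg]
    exact Finset.prod_ne_zero_iff.1 (hz (r + 1)) r (Finset.self_mem_range_succ r)
  have hprod : ∏' r : ℕ, (1 - z * q ^ r) ≠ 0 := by
    simpa only [← sub_eq_add_neg] using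
      tprod_one_add_ne_zero_of_summable hfactor (summable_norm_neg_mul_pow hq z)
  exact exists_forall_norm_le_of_tendsto ((tendsto_qPoch hq z).inv₀ hprod)

end QPochhammer

noncomputable def phi1Term (q q1 A B C x y : ℂ) (p : ℕ × ℕ) : ℂ :=
  qPoch q A (p.1 + p.2) * qPoch q1 B p.1 /
    (qPoch q C (p.1 + p.2) * qPoch q1 q1 p.1 * qPoch q q p.2) * x ^ p.1 * y ^ p.2

section Phi1

variable {q q1 A B C x y : ℂ}

lemma hasSum_phi1Term (hq : ‖q‖ < 1) (hq1 : ‖q1‖ < 1) (hC : ∀ n, qPoch q C n ≠ 0)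
    (hx : ‖x‖ < 1) (hy : ‖y‖ < 1) : HasSum (phi1Term q q1 A B C x y) (Phi1 q q1 A B C x y) := by
  refine Summable.hasSum ?_
  obtain ⟨MA, hA⟩ := exists_forall_norm_qPoch_le hq A
  obtain ⟨MB, hB⟩ := exists_forall_norm_qPoch_le hq1 B
  obtain ⟨MC, hC'⟩ := exists_forall_norm_inv_qPoch_le hq hC
  obtain ⟨M1, h1⟩ := exists_forall_norm_inv_qPoch_le hq1 (qPoch_self_ne_zero hq1)
  obtain ⟨M, h⟩ := exists_forall_norm_inv_qPoch_le hq (qPoch_self_ne_zero hq)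
  have hMA := (norm_nonneg _).trans (hA 0)
  have hMB := (norm_nonneg _).trans (hB 0)
  have hMC := (norm_nonneg _).trans (hC' 0)
  have hM1 := (norm_nonneg _).trans (h1 0)
  have hgeom := (summable_geometric_of_lt_one (norm_nonneg x) hx).mul_of_nonneg
    (summable_geometric_of_lt_one (norm_nonneg y) hy) (fun _ => by positivity) fun _ => by positivity
  refine (hgeom.mul_left (MA * MB * MC * M1 * M)).of_norm_bounded fun p => ?_
  have hterm : phi1Term q q1 A B C x y p =
      qPoch q A (p.1 + p.2) * qPoch q1 B p.1 * (qPoch q C (p.1 + p.2))⁻¹ *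
        (qPoch q1 q1 p.1)⁻¹ * (qPoch q q p.2)⁻¹ * (x ^ p.1 * y ^ p.2) := by
    rw [phi1Term]
    ring
  rw [hterm]
  simp only [norm_mul, norm_pow]
  gcongr
  exacts [hA _, hB _, hC' _, h1 _, h _]

lemma one_sub_mul_phi1Term (hC : ∀ n, qPoch q C n ≠ 0) (p : ℕ × ℕ) :
    (1 - C) * phi1Term q q1 A B C x y p
      = (1 - C * q ^ (p.1 + p.2)) * phi1Term q q1 A B (q * C) x y p := by
  simp only [phi1Term]
  linear_combination qPoch q A (p.1 + p.2) * qPoch q1 B p.1 / (qPoch q1 q1 p.1 * qPoch q q p.2) *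
    x ^ p.1 * y ^ p.2 * one_sub_div_qPoch hC (p.1 + p.2)

lemma phi1Term_mul_mul (p : ℕ × ℕ) :
    phi1Term q q1 A B C (q * x) (q * y) p = q ^ (p.1 + p.2) * phi1Term q q1 A B C x y p := by
  simp only [phi1Term, mul_pow, pow_add]
  ring

end Phi1

theorem stmt17_general (q q1 A B C x y : ℂ)
    (hq1 : ‖q‖ < 1)
    (hq11 : ‖q1‖ < 1)
    (hC : ∀ n : ℕ, qPoch q C n ≠ 0)
    (hx : ‖x‖ < 1) (hy : ‖y‖ < 1) :
    (1 - C) * Phi1 q q1 A B C x (x * y) =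
      (1 - C) * Phi1 q q1 A B (q * C) x (x * y)
        + (1 - q) * C * x * jackson q (fun t => Phi1 q q1 A B (q * C) t (t * y)) x := by
  have hq : q ≠ 1 := by rintro rfl; simp at hq1
  have hxy := norm_mul_lt_one hx hy
  have hqC := qPoch_mul_ne_zero hC
  have hsum := hasSum_phi1Term (A := A) (B := B) hq1 hq11 hqC hx hxy
  have hsum_q := hasSum_phi1Term (A := A) (B := B) hq1 hq11 hqC
    (norm_mul_lt_one hq1 hx) (norm_mul_lt_one hq1 hxy)
  rw [mul_right_comm (1 - q) C, mul_right_comm _ C, one_sub_mul_mul_jackson hq, mul_assoc q x y]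
  refine ((hasSum_phi1Term hq1 hq11 hC hx hxy).mul_left (1 - C)).unique ?_
  convert (hsum.mul_left (1 - C)).add ((hsum.sub hsum_q).mul_right C) using 1
  funext p
  rw [one_sub_mul_phi1Term hC, phi1Term_mul_mul]
  ring

theorem stmt17 (q q1 A B C x y : ℂ)
    (hq0 : 0 < ‖q‖) (hq1 : ‖q‖ < 1)
    (hq10 : 0 < ‖q1‖) (hq11 : ‖q1‖ < 1)
    (hC : ∀ n : ℕ, qPoch q C n ≠ 0)
    (hx0 : 0 < ‖x‖) (hx : ‖x‖ < 1) (hy : ‖y‖ < 1) :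
    (1 - C) * Phi1 q q1 A B C x (x * y) =
      (1 - C) * Phi1 q q1 A B (q * C) x (x * y)
        + (1 - q) * C * x * jackson q (fun t => Phi1 q q1 A B (q * C) t (t * y)) x :=
  stmt17_general q q1 A B C x y hq1 hq11 hC hx hy
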